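/- arXiv:2106.13212 — 3 statements merged into one kernel-verified Lean document; each statement's English description precedes it below -/
import Mathlib

section
/- Let 𝒞 be a class of convex bodies in ℝⁿ with the property that K ∈ 𝒞 implies K ∩ (K + x) ∈ 𝒞 for every x ∈ DK. Let μ be a Borel measure finite on every member of 𝒞, and let F be a continuous, invertible function such that μ is F-concave on 𝒞. Then for every K ∈ 𝒞 and all x, y ∈ DK and λ ∈ [0,1], g_{μ,K}((1−λ)x + λy) ≥ F^{−1}((1−λ)F(g_{μ,K}(x)) + λF(g_{μ,K}(y))); that is, the μ-covariogram g_{μ,K} is F-concave on DK. -/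
open MeasureTheory Set Filter Pointwise
open scoped ENNReal InnerProductSpace NNReal Topology

noncomputable section

/-- `n`-dimensional Euclidean space. -/
abbrev Euc (n : ℕ) := EuclideanSpace ℝ (Fin n)

/-- if `𝒞` is a class of convex bodies closed under `K ↦ K ∩ (K + x)` for
`x ∈ DK = K + (-K)`, `μ` is a Borel measure finite on members of `𝒞`, and `μ` is `F`-concave
on `𝒞` for a continuous invertible `F` (with inverse `Finv`), then the `μ`-covariogram
`g_{μ,K}(x) = μ(K ∩ (K + x))` is `F`-concave on `DK`. -/
theorem statement11 (n : ℕ) (hn : 1 ≤ n) (𝒞 : Set (Set (Euc n)))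
    (h𝒞 : ∀ K ∈ 𝒞, Convex ℝ K ∧ IsCompact K ∧ (interior K).Nonempty)
    (h𝒞cap : ∀ K ∈ 𝒞, ∀ x ∈ K + -K, K ∩ ((fun z => z + x) '' K) ∈ 𝒞)
    (μ : Measure (Euc n)) (hμfin : ∀ K ∈ 𝒞, μ K < ⊤)
    (F Finv : ℝ → ℝ)
    (hFcont : ContinuousOn F {s : ℝ | 0 < s ∧ ENNReal.ofReal s < μ Set.univ})
    (hFinv : ∀ s : ℝ, 0 < s → ENNReal.ofReal s < μ Set.univ → Finv (F s) = s)
    (hFconc : ∀ A ∈ 𝒞, ∀ B ∈ 𝒞, ∀ t ∈ Set.Icc (0 : ℝ) 1,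
      ENNReal.ofReal (Finv (t * F (μ A).toReal + (1 - t) * F (μ B).toReal)) ≤
        μ (t • A + (1 - t) • B)) :
    ∀ K ∈ 𝒞, ∀ x ∈ K + -K, ∀ y ∈ K + -K, ∀ l ∈ Set.Icc (0 : ℝ) 1,
      ENNReal.ofReal (Finv ((1 - l) * F ((μ (K ∩ ((fun z => z + x) '' K))).toReal) +
          l * F ((μ (K ∩ ((fun z => z + y) '' K))).toReal))) ≤
        μ (K ∩ ((fun z => z + ((1 - l) • x + l • y)) '' K)) := by
  intro K hK x hx y hy l hl
  set A := K ∩ ((fun z => z + x) '' K) with hAdef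
  set B := K ∩ ((fun z => z + y) '' K) with hBdef
  have hA : A ∈ 𝒞 := h𝒞cap K hK x hx
  have hB : B ∈ 𝒞 := h𝒞cap K hK y hy
  have hKconv : Convex ℝ K := (h𝒞 K hK).1
  have h1l : (0:ℝ) ≤ 1 - l := by linarith [hl.2]
  have hl0 : (0:ℝ) ≤ l := hl.1
  have hsub : (1 - l) • A + l • B ⊆
      K ∩ ((fun z => z + ((1 - l) • x + l • y)) '' K) := by
    rintro z hz
    rw [Set.mem_add] at hz
    obtain ⟨a, ha, b, hb, rfl⟩ := hz
    obtain ⟨a', ha', rfl⟩ := ha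
    obtain ⟨b', hb', rfl⟩ := hb
    obtain ⟨haK, k1, hk1, hk1e⟩ := ha'
    obtain ⟨hbK, k2, hk2, hk2e⟩ := hb'
    constructor
    · exact hKconv haK hbK h1l hl0 (by ring)
    · refine ⟨(1 - l) • k1 + l • k2, hKconv hk1 hk2 h1l hl0 (by ring), ?_⟩
      simp only at hk1e hk2e ⊢
      rw [← hk1e, ← hk2e]
      module
  have key := hFconc A hA B hB (1 - l) ⟨h1l, by linarith [hl.1]⟩
  rw [show (1:ℝ) - (1 - l) = l by ring] at key
  exact key.trans (measure_mono hsub)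
end
end

section
/- Let Q, F : (0,∞) → ℝ be invertible, increasing, differentiable functions such that Q ∘ F^{−1} is concave. Then for every a > 0 and every integer n ≥ 1, (1/F′(a)ⁿ) ∫_0^∞ F^{−1}(F(a) − t) t^{n−1} dt ≤ (1/Q′(a)ⁿ) ∫_0^∞ Q^{−1}(Q(a) − t) t^{n−1} dt. -/
/-!
Substituting `t = F'(a) s` on the left and `t = Q'(a) s` on the right turns both sides into
integrals `∫_0^∞ φ(s) s^{n-1} ds`, so it suffices to compare the integrands pointwise:
`F⁻¹(F a - F'(a) s) ≤ Q⁻¹(Q a - Q'(a) s)`. Concavity of `G = Q ∘ F⁻¹` makes the chord slopes of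
`G` ending at `F a` decrease as their left end moves right; in the limit they stay above
`Q'(a) / F'(a)`, i.e. `Q'(a) (F a - F b) ≤ F'(a) (Q a - Q b)` for `b < a`. Writing
`F b = F a - F'(a) s` this says `Q b ≤ Q a - Q'(a) s`, and the intermediate value theorem
turns it into the pointwise bound. When `Q'(a) = 0` the right-hand side is `⊤ * I` with `I > 0`.
-/

open MeasureTheory Set Filter
open scoped ENNReal Topology

theorem HasDerivAt.le_mul_of_eventually_sub_le_mul_sub {f g : ℝ → ℝ} {f' g' a S : ℝ}
    (hf : HasDerivAt f f' a) (hg : HasDerivAt g g' a)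
    (h : ∀ᶠ b in 𝓝[<] a, g a - g b ≤ S * (f a - f b)) : g' ≤ S * f' := by
  refine le_of_tendsto_of_tendsto (hg.tendsto_slope.mono_left (nhdsLT_le_nhdsNE a))
    ((hf.tendsto_slope.mono_left (nhdsLT_le_nhdsNE a)).const_mul S) ?_
  filter_upwards [h, self_mem_nhdsWithin] with b hb (hba : b < a)
  rw [slope_def_field, slope_def_field, mul_div_assoc']
  exact div_le_div_of_nonpos_of_le (by linarith) (by linarith)

theorem Set.LeftInvOn.le_apply_of_mem_Icc {Q Qinv : ℝ → ℝ} {b c y : ℝ}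
    (hinv : LeftInvOn Qinv Q (Icc b c)) (hbc : b ≤ c) (hQ : ContinuousOn Q (Icc b c))
    (hy : y ∈ Icc (Q b) (Q c)) : b ≤ Qinv y := by
  obtain ⟨x, hx, rfl⟩ := intermediate_value_Icc hbc hQ hy
  rw [hinv hx]
  exact hx.1

theorem lintegral_Ioi_mul_pow_comp_const_mul {c : ℝ} (hc : 0 < c) (φ : ℝ → ℝ) (k : ℕ) :
    (ENNReal.ofReal c ^ (k + 1))⁻¹ * ∫⁻ t in Ioi 0, ENNReal.ofReal (φ t * t ^ k) =
      ∫⁻ s in Ioi 0, ENNReal.ofReal (φ (c * s) * s ^ k) := by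
  have hsubst : ∫⁻ t in Ioi 0, ENNReal.ofReal (φ t * t ^ k) =
      ENNReal.ofReal c ^ (k + 1) * ∫⁻ s in Ioi 0, ENNReal.ofReal (φ (c * s) * s ^ k) := by
    rw [← image_const_mul_Ioi_zero hc, lintegral_image_eq_lintegral_abs_deriv_mul
      measurableSet_Ioi (fun s _ => ((hasDerivAt_id' s).const_mul c).hasDerivWithinAt)
      (mul_right_injective₀ hc.ne').injOn, image_const_mul_Ioi_zero hc,
      ← lintegral_const_mul' _ _ (by finiteness)]
    refine lintegral_congr fun s => ?_
    rw [mul_one, abs_of_pos hc, ← ENNReal.ofReal_pow hc.le, ← ENNReal.ofReal_mul hc.le,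
      ← ENNReal.ofReal_mul (by positivity)]
    ring_nf
  rw [hsubst, ENNReal.inv_mul_cancel_left (by positivity) (by finiteness)]

theorem nonneg_of_inv_of_eq_zero_of_notMem_image {Q Qinv : ℝ → ℝ}
    (hQinv : ∀ s : ℝ, 0 < s → Qinv (Q s) = s)
    (hQinv0 : ∀ t : ℝ, t ∉ Q '' Ioi 0 → Qinv t = 0) (y : ℝ) : 0 ≤ Qinv y := by
  by_cases hy : y ∈ Q '' Ioi 0
  · obtain ⟨x, hx, rfl⟩ := hy
    rw [hQinv x hx]
    exact le_of_lt hx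
  · rw [hQinv0 y hy]

theorem sub_eq_slope_comp_mul_sub {F Finv Q : ℝ → ℝ} (hFinv : ∀ s : ℝ, 0 < s → Finv (F s) = s)
    {a b : ℝ} (ha : 0 < a) (hb : 0 < b) :
    Q a - Q b = slope (fun t => Q (Finv t)) (F a) (F b) * (F a - F b) := by
  have h := sub_smul_slope (fun t => Q (Finv t)) (F a) (F b)
  rw [smul_eq_mul, vsub_eq_sub, hFinv a ha, hFinv b hb] at h
  linarith

theorem sub_le_slope_comp_mul_sub_of_concaveOn {F Finv Q : ℝ → ℝ}
    (hFmono : StrictMonoOn F (Ioi 0)) (hFinv : ∀ s : ℝ, 0 < s → Finv (F s) = s)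
    (hconc : ConcaveOn ℝ (F '' Ioi 0) fun t => Q (Finv t)) {a b b' : ℝ}
    (hb : 0 < b) (hbb' : b < b') (hb'a : b' < a) :
    Q a - Q b' ≤ slope (fun t => Q (Finv t)) (F a) (F b) * (F a - F b') := by
  have hb' : 0 < b' := hb.trans hbb'
  have ha : 0 < a := hb'.trans hb'a
  have hFb'a : F b' < F a := hFmono hb' ha hb'a
  have hslope :
      slope (fun t => Q (Finv t)) (F a) (F b') ≤ slope (fun t => Q (Finv t)) (F a) (F b) :=
    hconc.slope_anti (mem_image_of_mem F ha)
      ⟨mem_image_of_mem F hb, (hFmono hb ha (hbb'.trans hb'a)).ne⟩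
      ⟨mem_image_of_mem F hb', hFb'a.ne⟩ (hFmono hb hb' hbb').le
  rw [sub_eq_slope_comp_mul_sub hFinv ha hb']
  exact mul_le_mul_of_nonneg_right hslope (sub_nonneg.2 hFb'a.le)

theorem mul_sub_le_mul_sub_of_concaveOn_comp {F Finv Q : ℝ → ℝ} {f' q' a b : ℝ}
    (hFmono : StrictMonoOn F (Ioi 0)) (hFinv : ∀ s : ℝ, 0 < s → Finv (F s) = s)
    (hconc : ConcaveOn ℝ (F '' Ioi 0) fun t => Q (Finv t))
    (hF : HasDerivAt F f' a) (hQ : HasDerivAt Q q' a) (hb : 0 < b) (hba : b < a) :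
    q' * (F a - F b) ≤ f' * (Q a - Q b) := by
  set S := slope (fun t => Q (Finv t)) (F a) (F b)
  have hq' : q' ≤ S * f' := hF.le_mul_of_eventually_sub_le_mul_sub hQ <| by
    filter_upwards [Ioo_mem_nhdsLT hba] with b' hb'
    exact sub_le_slope_comp_mul_sub_of_concaveOn hFmono hFinv hconc hb hb'.1 hb'.2
  calc q' * (F a - F b) ≤ S * f' * (F a - F b) :=
        mul_le_mul_of_nonneg_right hq' (sub_nonneg.2 (hFmono hb (hb.trans hba) hba).le)
    _ = f' * (Q a - Q b) := by
      rw [sub_eq_slope_comp_mul_sub (Q := Q) hFinv (hb.trans hba) hb]; ring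

theorem inv_sub_mul_le_inv_sub_mul {F Finv Q Qinv : ℝ → ℝ} {f' q' a s : ℝ}
    (hFmono : StrictMonoOn F (Ioi 0)) (hQcont : ContinuousOn Q (Ioi 0))
    (hFinv : ∀ s : ℝ, 0 < s → Finv (F s) = s) (hQinv : ∀ s : ℝ, 0 < s → Qinv (Q s) = s)
    (hFinv0 : ∀ t : ℝ, t ∉ F '' Ioi 0 → Finv t = 0)
    (hQinv0 : ∀ t : ℝ, t ∉ Q '' Ioi 0 → Qinv t = 0)
    (ha : 0 < a) (hf' : 0 < f') (hq' : 0 ≤ q')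
    (htangent : ∀ b, 0 < b → b < a → q' * (F a - F b) ≤ f' * (Q a - Q b)) (hs : 0 < s) :
    Finv (F a - f' * s) ≤ Qinv (Q a - q' * s) := by
  by_cases hy : F a - f' * s ∈ F '' Ioi 0
  swap
  · rw [hFinv0 _ hy]
    exact nonneg_of_inv_of_eq_zero_of_notMem_image hQinv hQinv0 _
  obtain ⟨b, hb, hFb⟩ := hy
  rw [← hFb, hFinv b hb]
  have hba : b < a := (hFmono.lt_iff_lt hb ha).1 (by linarith [mul_pos hf' hs])
  have hQb : q' * s ≤ Q a - Q b := by
    refine le_of_mul_le_mul_left ?_ hf'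
    have h := htangent b hb hba
    rw [hFb, sub_sub_cancel, mul_left_comm] at h
    exact h
  exact LeftInvOn.le_apply_of_mem_Icc (fun x hx => hQinv x (hb.trans_le hx.1)) hba.le
    (hQcont.mono fun x hx => hb.trans_le hx.1) ⟨by linarith, by nlinarith⟩

theorem lintegral_inv_sub_mul_pow_ne_zero {Q Qinv : ℝ → ℝ}
    (hQmono : StrictMonoOn Q (Ioi 0)) (hQcont : ContinuousOn Q (Ioi 0))
    (hQinv : ∀ s : ℝ, 0 < s → Qinv (Q s) = s) {a : ℝ} (ha : 0 < a) (k : ℕ) :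
    ∫⁻ t in Ioi 0, ENNReal.ofReal (Qinv (Q a - t) * t ^ k) ≠ 0 := by
  set ε := Q a - Q (a / 2)
  have hε : 0 < ε := sub_pos.2 (hQmono (half_pos ha) ha (half_lt_self ha))
  have hbound : ∀ t ∈ Ioo (ε / 2) ε, ENNReal.ofReal (a / 2 * (ε / 2) ^ k) ≤
      ENNReal.ofReal (Qinv (Q a - t) * t ^ k) := by
    intro t ht
    have hinv : a / 2 ≤ Qinv (Q a - t) :=
      LeftInvOn.le_apply_of_mem_Icc (fun x hx => hQinv x ((half_pos ha).trans_le hx.1))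
        (half_lt_self ha).le (hQcont.mono fun x hx => (half_pos ha).trans_le hx.1)
        ⟨by linarith [ht.2], by linarith [ht.1]⟩
    exact ENNReal.ofReal_le_ofReal (mul_le_mul hinv (pow_le_pow_left₀ (by positivity) ht.1.le k)
      (by positivity) (by linarith))
  have hpos : 0 < ∫⁻ _ in Ioo (ε / 2) ε, ENNReal.ofReal (a / 2 * (ε / 2) ^ k) := by
    rw [setLIntegral_const, Real.volume_Ioo]
    exact ENNReal.mul_pos (by simp only [ne_eq, ENNReal.ofReal_eq_zero, not_le]; positivity)
      (by simp only [ne_eq, ENNReal.ofReal_eq_zero, not_le]; linarith)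
  refine (hpos.trans_le ?_).ne'
  calc _ ≤ ∫⁻ t in Ioo (ε / 2) ε, ENNReal.ofReal (Qinv (Q a - t) * t ^ k) :=
        setLIntegral_mono' measurableSet_Ioo hbound
    _ ≤ _ := lintegral_mono_set fun t ht => (half_pos hε).trans ht.1

/-- if `Q, F : (0,∞) → ℝ` are invertible, increasing, differentiable and
`Q ∘ F⁻¹` is concave (the inverses `Finv`, `Qinv` being extended by `0` off the ranges of
`F`, `Q`), then for every `a > 0` and `n ≥ 1`,
`(1/F'(a)ⁿ)∫_0^∞ F⁻¹(F(a)−t)t^{n−1}dt ≤ (1/Q'(a)ⁿ)∫_0^∞ Q⁻¹(Q(a)−t)t^{n−1}dt`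
(as an inequality of extended nonnegative reals). -/
theorem statement17 (F Finv F' Q Qinv Q' : ℝ → ℝ)
    (hFmono : StrictMonoOn F (Set.Ioi 0)) (hQmono : StrictMonoOn Q (Set.Ioi 0))
    (hFdiff : ∀ s : ℝ, 0 < s → HasDerivAt F (F' s) s)
    (hQdiff : ∀ s : ℝ, 0 < s → HasDerivAt Q (Q' s) s)
    (hFinv : ∀ s : ℝ, 0 < s → Finv (F s) = s)
    (hQinv : ∀ s : ℝ, 0 < s → Qinv (Q s) = s)
    (hFinv0 : ∀ t : ℝ, t ∉ F '' Set.Ioi 0 → Finv t = 0)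
    (hQinv0 : ∀ t : ℝ, t ∉ Q '' Set.Ioi 0 → Qinv t = 0)
    (hconc : ConcaveOn ℝ (F '' Set.Ioi 0) fun t => Q (Finv t))
    (a : ℝ) (ha : 0 < a) (n : ℕ) (hn : 1 ≤ n) :
    ((ENNReal.ofReal (F' a)) ^ n)⁻¹ *
        ∫⁻ t in Set.Ioi (0 : ℝ), ENNReal.ofReal (Finv (F a - t) * t ^ (n - 1)) ≤
      ((ENNReal.ofReal (Q' a)) ^ n)⁻¹ *
        ∫⁻ t in Set.Ioi (0 : ℝ), ENNReal.ofReal (Qinv (Q a - t) * t ^ (n - 1)) := by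
  obtain ⟨k, rfl⟩ := Nat.exists_eq_add_of_le' hn
  simp only [Nat.add_sub_cancel]
  have hQcont : ContinuousOn Q (Ioi 0) := fun x hx => (hQdiff x hx).continuousAt.continuousWithinAt
  rcases le_or_gt (Q' a) 0 with hQ' | hQ'
  · rw [ENNReal.ofReal_eq_zero.2 hQ', zero_pow k.succ_ne_zero, ENNReal.inv_zero,
      ENNReal.top_mul (lintegral_inv_sub_mul_pow_ne_zero hQmono hQcont hQinv ha k)]
    exact le_top
  have htangent : ∀ b, 0 < b → b < a → Q' a * (F a - F b) ≤ F' a * (Q a - Q b) :=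
    fun b hb hba =>
      mul_sub_le_mul_sub_of_concaveOn_comp hFmono hFinv hconc (hFdiff a ha) (hQdiff a ha) hb hba
  have hF' : 0 < F' a := by
    have hFa : 0 < Q' a * (F a - F (a / 2)) :=
      mul_pos hQ' (sub_pos.2 (hFmono (half_pos ha) ha (half_lt_self ha)))
    exact pos_of_mul_pos_left (hFa.trans_le (htangent _ (half_pos ha) (half_lt_self ha)))
      (sub_nonneg.2 (hQmono (half_pos ha) ha (half_lt_self ha)).le)
  rw [lintegral_Ioi_mul_pow_comp_const_mul hF' (fun t => Finv (F a - t)),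
    lintegral_Ioi_mul_pow_comp_const_mul hQ' (fun t => Qinv (Q a - t))]
  refine setLIntegral_mono' measurableSet_Ioi fun s hs => ENNReal.ofReal_le_ofReal ?_
  exact mul_le_mul_of_nonneg_right (inv_sub_mul_le_inv_sub_mul hFmono hQcont hFinv hQinv hFinv0
    hQinv0 ha hF' hQ'.le htangent hs) (pow_nonneg (le_of_lt hs) k)
end

section
/- Let K ⊂ ℝⁿ be a convex body and μ ∈ Λ such that the μ-surface area measure S_{μ,K} is isotropic. Then (μ(∂K)/(2n))·B₂ⁿ ⊆ Π_μK ⊆ (μ(∂K)/(2√n))·B₂ⁿ. -/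
open MeasureTheory Set Filter Pointwise
open scoped ENNReal InnerProductSpace NNReal Topology

noncomputable section

/-- `nK` is (`H^{n-1}`-almost everywhere on `∂K`) an outer unit normal field of `K`. -/
def IsAEOuterNormal {n : ℕ} (K : Set (Euc n)) (nK : Euc n → Euc n) : Prop :=
  ∀ᵐ y ∂((μH[(n : ℝ) - 1] : Measure (Euc n)).restrict (frontier K)),
    ‖nK y‖ = 1 ∧ ∀ x ∈ K, ⟪x, nK y⟫_ℝ ≤ ⟪y, nK y⟫_ℝ

/-- The measure-dependent projection body `Π_μK`, realized as the convex body whose support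
function is `h_{Π_μK}(θ) = (1/2)∫_{∂K}|⟨θ, n_K(y)⟩| φ(y) dH^{n-1}(y)`:
`Π_μK = {x : ∀ θ, ⟨x,θ⟩ ≤ h_{Π_μK}(θ)}`. -/
noncomputable def muProjBody {n : ℕ} (K : Set (Euc n)) (φ : Euc n → ℝ)
    (nK : Euc n → Euc n) : Set (Euc n) :=
  {x | ∀ θ : Euc n, ⟪x, θ⟫_ℝ ≤
    (1 / 2) * ∫ y in frontier K, |⟪θ, nK y⟫_ℝ| * φ y ∂(μH[(n : ℝ) - 1])}

/-!
Pushing the `φ`-weighted boundary measure forward along the Gauss map turns the support function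
of `Π_μK` into `h(θ) = ½ ∫ |⟪θ, u⟫| dS(u)`, where `S` is a finite measure on the unit sphere of
total mass `μ(∂K)`. For a unit vector `θ`, `|⟪θ, u⟫| ≤ 1` gives
`∫ |⟪θ, u⟫| dS ≥ ∫ ⟪θ, u⟫² dS = μ(∂K)/n`, while Cauchy–Schwarz gives
`(∫ |⟪θ, u⟫| dS)² ≤ μ(∂K) ∫ ⟪θ, u⟫² dS = μ(∂K)²/n`. By positive homogeneity of `h` this means
`μ(∂K)/(2n) ‖θ‖ ≤ h(θ) ≤ μ(∂K)/(2√n) ‖θ‖` for all `θ`, and these are the two inclusions.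
-/

section Homogeneous

variable {E : Type*} [NormedAddCommGroup E] [NormedSpace ℝ E] {g : E → ℝ}

theorem apply_zero_of_smul_eq_mul (hg : ∀ c : ℝ, 0 ≤ c → ∀ θ, g (c • θ) = c * g θ) :
    g 0 = 0 := by
  simpa using hg 0 le_rfl 0

theorem apply_eq_norm_mul_apply_inv_norm_smul
    (hg : ∀ c : ℝ, 0 ≤ c → ∀ θ, g (c • θ) = c * g θ) {θ : E} (hθ : θ ≠ 0) :
    g θ = ‖θ‖ * g (‖θ‖⁻¹ • θ) := by
  rw [← hg _ (norm_nonneg θ), smul_inv_smul₀ (norm_ne_zero_iff.mpr hθ)]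

theorem mul_norm_le_of_forall_norm_eq_one (hg : ∀ c : ℝ, 0 ≤ c → ∀ θ, g (c • θ) = c * g θ)
    {a : ℝ} (h : ∀ θ, ‖θ‖ = 1 → a ≤ g θ) (θ : E) : a * ‖θ‖ ≤ g θ := by
  rcases eq_or_ne θ 0 with rfl | hθ
  · simp [apply_zero_of_smul_eq_mul hg]
  · rw [apply_eq_norm_mul_apply_inv_norm_smul hg hθ, mul_comm]
    exact mul_le_mul_of_nonneg_left (h _ (norm_smul_inv_norm hθ)) (norm_nonneg θ)

theorem le_mul_norm_of_forall_norm_eq_one (hg : ∀ c : ℝ, 0 ≤ c → ∀ θ, g (c • θ) = c * g θ)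
    {b : ℝ} (h : ∀ θ, ‖θ‖ = 1 → g θ ≤ b) (θ : E) : g θ ≤ b * ‖θ‖ := by
  rcases eq_or_ne θ 0 with rfl | hθ
  · simp [apply_zero_of_smul_eq_mul hg]
  · rw [apply_eq_norm_mul_apply_inv_norm_smul hg hθ, mul_comm b]
    exact mul_le_mul_of_nonneg_left (h _ (norm_smul_inv_norm hθ)) (norm_nonneg θ)

end Homogeneous

section SupportFunction

variable {E : Type*} [NormedAddCommGroup E] [InnerProductSpace ℝ E] {h : E → ℝ}

theorem smul_unitClosedBall_subset_setOf_inner_le {a : ℝ} (ha : 0 ≤ a)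
    (hh : ∀ θ, a * ‖θ‖ ≤ h θ) :
    a • Metric.closedBall (0 : E) 1 ⊆ {x | ∀ θ, ⟪x, θ⟫_ℝ ≤ h θ} := by
  rw [smul_unitClosedBall_of_nonneg ha]
  intro x hx θ
  rw [mem_closedBall_zero_iff] at hx
  calc ⟪x, θ⟫_ℝ ≤ ‖x‖ * ‖θ‖ := real_inner_le_norm x θ
    _ ≤ a * ‖θ‖ := by gcongr
    _ ≤ h θ := hh θ

theorem setOf_inner_le_subset_smul_unitClosedBall {b : ℝ} (hh : ∀ θ, h θ ≤ b * ‖θ‖) :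
    {x | ∀ θ, ⟪x, θ⟫_ℝ ≤ h θ} ⊆ b • Metric.closedBall (0 : E) 1 := by
  rw [smul_unitClosedBall, Real.norm_eq_abs]
  intro x hx
  rw [mem_closedBall_zero_iff]
  have hxx : ‖x‖ * ‖x‖ ≤ |b| * ‖x‖ := by
    rw [← real_inner_self_eq_norm_mul_norm]
    exact (hx x).trans ((hh x).trans (by gcongr; exact le_abs_self b))
  rcases (norm_nonneg x).eq_or_lt with hx0 | hx0
  · rw [← hx0]; exact abs_nonneg b
  · exact le_of_mul_le_mul_right hxx hx0

end SupportFunction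

section MeanInequalities

variable {α : Type*} [MeasurableSpace α] {μ : Measure α} [IsFiniteMeasure μ] {f : α → ℝ}

theorem sq_integral_abs_le_measureReal_mul_integral_sq (hf : MemLp f 2 μ) :
    (∫ a, |f a| ∂μ) ^ 2 ≤ μ.real univ * ∫ a, f a ^ 2 ∂μ := by
  have holder := integral_mul_le_Lp_mul_Lq_of_nonneg (μ := μ) Real.HolderConjugate.two_two
    (f := fun a => |f a|) (g := fun _ => (1 : ℝ)) (ae_of_all _ fun a => abs_nonneg _)
    (ae_of_all _ fun _ => zero_le_one) (by rw [ENNReal.ofReal_ofNat]; exact hf.abs)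
    (memLp_const 1)
  simp only [mul_one, one_pow, Real.rpow_two, sq_abs, integral_const, smul_eq_mul] at holder
  calc (∫ a, |f a| ∂μ) ^ 2
      ≤ ((∫ a, f a ^ 2 ∂μ) ^ (1 / 2 : ℝ) * (μ.real univ) ^ (1 / 2 : ℝ)) ^ 2 :=
        pow_le_pow_left₀ (integral_nonneg fun a => abs_nonneg (f a)) holder 2
    _ = μ.real univ * ∫ a, f a ^ 2 ∂μ := by
        rw [mul_pow, ← Real.sqrt_eq_rpow, ← Real.sqrt_eq_rpow,
          Real.sq_sqrt (integral_nonneg fun a => sq_nonneg (f a)),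
          Real.sq_sqrt measureReal_nonneg, mul_comm]

theorem integral_sq_le_integral_abs (hf : AEStronglyMeasurable f μ)
    (hf1 : ∀ᵐ a ∂μ, |f a| ≤ 1) : ∫ a, f a ^ 2 ∂μ ≤ ∫ a, |f a| ∂μ := by
  have hLp : MemLp f 2 μ := .of_bound hf 1 hf1
  refine integral_mono_ae hLp.integrable_sq (hLp.integrable one_le_two).abs ?_
  filter_upwards [hf1] with a ha
  rw [← sq_abs]
  nlinarith [abs_nonneg (f a)]

end MeanInequalities

section IsotropicMeasure

variable {E : Type*} [NormedAddCommGroup E] [InnerProductSpace ℝ E] [MeasurableSpace E]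
  {S : Measure E}

theorem integral_abs_inner_smul_left (c : ℝ) (θ : E) :
    ∫ u, |⟪c • θ, u⟫_ℝ| ∂S = |c| * ∫ u, |⟪θ, u⟫_ℝ| ∂S := by
  simp_rw [real_inner_smul_left, abs_mul]
  exact integral_const_mul _ _

theorem ae_abs_inner_le_one (hS : ∀ᵐ u ∂S, ‖u‖ ≤ 1) {θ : E} (hθ : ‖θ‖ = 1) :
    ∀ᵐ u ∂S, |⟪θ, u⟫_ℝ| ≤ 1 := by
  filter_upwards [hS] with u hu
  calc |⟪θ, u⟫_ℝ| ≤ ‖θ‖ * ‖u‖ := abs_real_inner_le_norm θ u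
    _ ≤ 1 := by rw [hθ, one_mul]; exact hu

variable [OpensMeasurableSpace E] {n : ℕ}

theorem integral_inner_sq_eq_of_lintegral {θ : E}
    (hθ : ∫⁻ u, ENNReal.ofReal (⟪θ, u⟫_ℝ ^ 2) ∂S = S univ / n) :
    ∫ u, ⟪θ, u⟫_ℝ ^ 2 ∂S = S.real univ / n := by
  rw [integral_eq_lintegral_of_nonneg_ae (ae_of_all _ fun u => sq_nonneg _)
    ((continuous_const.inner continuous_id').pow 2).aestronglyMeasurable, hθ,
    ENNReal.toReal_div, ENNReal.toReal_natCast, measureReal_def]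

variable [IsFiniteMeasure S]

theorem div_mul_norm_le_integral_abs_inner (hS : ∀ᵐ u ∂S, ‖u‖ ≤ 1)
    (hiso : ∀ θ : E, ‖θ‖ = 1 → ∫ u, ⟪θ, u⟫_ℝ ^ 2 ∂S = S.real univ / n) (θ : E) :
    S.real univ / n * ‖θ‖ ≤ ∫ u, |⟪θ, u⟫_ℝ| ∂S := by
  refine mul_norm_le_of_forall_norm_eq_one (g := fun θ => ∫ u, |⟪θ, u⟫_ℝ| ∂S)
    (fun c hc θ => by rw [integral_abs_inner_smul_left, abs_of_nonneg hc]) (fun θ hθ => ?_) θ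
  rw [← hiso θ hθ]
  exact integral_sq_le_integral_abs (continuous_const.inner continuous_id').aestronglyMeasurable
    (ae_abs_inner_le_one hS hθ)

theorem integral_abs_inner_le_div_sqrt_mul_norm (hS : ∀ᵐ u ∂S, ‖u‖ ≤ 1)
    (hiso : ∀ θ : E, ‖θ‖ = 1 → ∫ u, ⟪θ, u⟫_ℝ ^ 2 ∂S = S.real univ / n) (θ : E) :
    ∫ u, |⟪θ, u⟫_ℝ| ∂S ≤ S.real univ / Real.sqrt n * ‖θ‖ := by
  refine le_mul_norm_of_forall_norm_eq_one (g := fun θ => ∫ u, |⟪θ, u⟫_ℝ| ∂S)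
    (fun c hc θ => by rw [integral_abs_inner_smul_left, abs_of_nonneg hc]) (fun θ hθ => ?_) θ
  have hLp : MemLp (fun u => ⟪θ, u⟫_ℝ) 2 S :=
    .of_bound (continuous_const.inner continuous_id').aestronglyMeasurable 1
      (ae_abs_inner_le_one hS hθ)
  have hCS := sq_integral_abs_le_measureReal_mul_integral_sq hLp
  rw [hiso θ hθ] at hCS
  refine (pow_le_pow_iff_left₀ (integral_nonneg fun u => abs_nonneg _) (by positivity)
    two_ne_zero).mp (hCS.trans_eq ?_)
  rw [div_pow, Real.sq_sqrt n.cast_nonneg]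
  ring

end IsotropicMeasure

section PushforwardDensity

variable {X E : Type*} [MeasurableSpace X] [MeasurableSpace E] {ν : Measure X} {φ : X → ℝ}
  {N : X → E}

theorem integral_map_withDensity_ofReal (hφ : AEMeasurable φ ν) (hφ0 : 0 ≤ᵐ[ν] φ)
    (hN : AEMeasurable N ν) {f : E → ℝ}
    (hf : AEStronglyMeasurable f ((ν.withDensity fun x => ENNReal.ofReal (φ x)).map N)) :
    ∫ u, f u ∂(ν.withDensity fun x => ENNReal.ofReal (φ x)).map N = ∫ x, f (N x) * φ x ∂ν := by
  rw [integral_map (hN.mono_ac (withDensity_absolutelyContinuous _ _)) hf,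
    integral_withDensity_eq_integral_toReal_smul₀ hφ.ennreal_ofReal
      (ae_of_all _ fun _ => ENNReal.ofReal_lt_top)]
  refine integral_congr_ae ?_
  filter_upwards [hφ0] with x hx
  rw [ENNReal.toReal_ofReal hx, smul_eq_mul, mul_comm]

theorem ae_map_withDensity_of_ae {ρ : X → ℝ≥0∞} (hN : AEMeasurable N ν) {p : E → Prop}
    (hp : MeasurableSet {u | p u}) (h : ∀ᵐ x ∂ν, p (N x)) :
    ∀ᵐ u ∂(ν.withDensity ρ).map N, p u := by
  rw [ae_map_iff (hN.mono_ac (withDensity_absolutelyContinuous _ _)) hp]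
  exact (withDensity_absolutelyContinuous _ _).ae_le h

theorem map_withDensity_ofReal_apply_univ (hφ : Integrable φ ν) (hφ0 : 0 ≤ᵐ[ν] φ)
    (hN : AEMeasurable N ν) :
    (ν.withDensity fun x => ENNReal.ofReal (φ x)).map N univ = ENNReal.ofReal (∫ x, φ x ∂ν) := by
  rw [Measure.map_apply_of_aemeasurable (hN.mono_ac (withDensity_absolutelyContinuous _ _))
    MeasurableSet.univ, preimage_univ, withDensity_apply _ MeasurableSet.univ,
    Measure.restrict_univ, ofReal_integral_eq_lintegral_ofReal hφ hφ0]

end PushforwardDensity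

theorem statement19_general (n : ℕ) (K : Set (Euc n))
    (φ : Euc n → ℝ) (hφ0 : ∀ x, 0 ≤ φ x)
    (nK : Euc n → Euc n) (hnK : IsAEOuterNormal K nK)
    (hnKm : AEMeasurable nK ((μH[(n : ℝ) - 1] : Measure (Euc n)).restrict (frontier K)))
    (hφint : IntegrableOn φ (frontier K) μH[(n : ℝ) - 1])
    (S : Measure (Euc n))
    (hS : S = Measure.map nK
      ((((μH[(n : ℝ) - 1] : Measure (Euc n)).restrict (frontier K)).withDensity
        fun x => ENNReal.ofReal (φ x))))
    (hiso : ∀ θ : Euc n, ‖θ‖ = 1 →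
      ∫⁻ u, ENNReal.ofReal (⟪θ, u⟫_ℝ ^ 2) ∂S = S Set.univ / n) :
    ((∫ y in frontier K, φ y ∂(μH[(n : ℝ) - 1])) / (2 * n)) •
        Metric.closedBall (0 : Euc n) 1 ⊆ muProjBody K φ nK ∧
      muProjBody K φ nK ⊆
        ((∫ y in frontier K, φ y ∂(μH[(n : ℝ) - 1])) / (2 * Real.sqrt n)) •
          Metric.closedBall (0 : Euc n) 1 := by
  have hφ0' : 0 ≤ᵐ[(μH[(n : ℝ) - 1] : Measure (Euc n)).restrict (frontier K)] φ :=
    ae_of_all _ hφ0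
  have hmass : S univ = ENNReal.ofReal (∫ y in frontier K, φ y ∂(μH[(n : ℝ) - 1])) :=
    hS ▸ map_withDensity_ofReal_apply_univ hφint hφ0' hnKm
  have : IsFiniteMeasure S := ⟨by simp [hmass]⟩
  have hmassReal : S.real univ = ∫ y in frontier K, φ y ∂(μH[(n : ℝ) - 1]) := by
    rw [measureReal_def, hmass, ENNReal.toReal_ofReal (integral_nonneg hφ0)]
  have hball : ∀ᵐ u ∂S, ‖u‖ ≤ 1 :=
    hS ▸ ae_map_withDensity_of_ae hnKm (measurableSet_le measurable_norm measurable_const)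
      (hnK.mono fun y hy => hy.1.le)
  have hiso' (θ : Euc n) (hθ : ‖θ‖ = 1) : ∫ u, ⟪θ, u⟫_ℝ ^ 2 ∂S = S.real univ / n :=
    integral_inner_sq_eq_of_lintegral (hiso θ hθ)
  have hproj : muProjBody K φ nK = {x | ∀ θ, ⟪x, θ⟫_ℝ ≤ (1 / 2) * ∫ u, |⟪θ, u⟫_ℝ| ∂S} := by
    ext x
    simp only [muProjBody, hS, integral_map_withDensity_ofReal
      hφint.aemeasurable hφ0' hnKm (continuous_const.inner continuous_id').abs.aestronglyMeasurable]
  rw [hproj, ← hmassReal]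
  constructor
  · refine smul_unitClosedBall_subset_setOf_inner_le (by positivity) fun θ => ?_
    calc S.real univ / (2 * n) * ‖θ‖ = 1 / 2 * (S.real univ / n * ‖θ‖) := by ring
      _ ≤ _ := by gcongr; exact div_mul_norm_le_integral_abs_inner hball hiso' θ
  · refine setOf_inner_le_subset_smul_unitClosedBall fun θ => ?_
    calc 1 / 2 * ∫ u, |⟪θ, u⟫_ℝ| ∂S ≤ 1 / 2 * (S.real univ / Real.sqrt n * ‖θ‖) := by
          gcongr; exact integral_abs_inner_le_div_sqrt_mul_norm hball hiso' θ
      _ = S.real univ / (2 * Real.sqrt n) * ‖θ‖ := by ring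

/-- if the `μ`-surface area measure `S_{μ,K}` (the pushforward under the
Gauss map of the `φ`-weighted boundary measure) is isotropic, then
`(μ(∂K)/(2n)) B₂ⁿ ⊆ Π_μK ⊆ (μ(∂K)/(2√n)) B₂ⁿ`. -/
theorem statement19 (n : ℕ) (hn : 1 ≤ n) (K : Set (Euc n))
    (hKconv : Convex ℝ K) (hKcomp : IsCompact K) (hKint : (interior K).Nonempty)
    (φ : Euc n → ℝ) (hφmeas : Measurable φ) (hφ0 : ∀ x, 0 ≤ φ x)
    (hφloc : LocallyIntegrable φ volume)
    (μ : Measure (Euc n)) (hμ : μ = volume.withDensity fun x => ENNReal.ofReal (φ x))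
    (nK : Euc n → Euc n) (hnK : IsAEOuterNormal K nK)
    (hnKm : AEMeasurable nK ((μH[(n : ℝ) - 1] : Measure (Euc n)).restrict (frontier K)))
    (hφint : IntegrableOn φ (frontier K) μH[(n : ℝ) - 1])
    (S : Measure (Euc n))
    (hS : S = Measure.map nK
      ((((μH[(n : ℝ) - 1] : Measure (Euc n)).restrict (frontier K)).withDensity
        fun x => ENNReal.ofReal (φ x))))
    (hiso : ∀ θ : Euc n, ‖θ‖ = 1 →
      ∫⁻ u, ENNReal.ofReal (⟪θ, u⟫_ℝ ^ 2) ∂S = S Set.univ / n) :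
    ((∫ y in frontier K, φ y ∂(μH[(n : ℝ) - 1])) / (2 * n)) •
        Metric.closedBall (0 : Euc n) 1 ⊆ muProjBody K φ nK ∧
      muProjBody K φ nK ⊆
        ((∫ y in frontier K, φ y ∂(μH[(n : ℝ) - 1])) / (2 * Real.sqrt n)) •
          Metric.closedBall (0 : Euc n) 1 :=
  statement19_general n K φ hφ0 nK hnK hnKm hφint S hS hiso
end
end
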